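/- arXiv:2602.04455 — 2 statements merged into one kernel-verified Lean document; each statement's English description precedes it below -/
import Mathlib

section
/- Let E be a finite-dimensional real normed vector space, let N be a natural number, let L₁, …, L_N be continuous linear functionals on E, and define f : E → ℝ by f(p) = ∏_{i=1}^N Lᵢ(p). Then the N-th iterated Fréchet derivative of f at the point 0, evaluated on vectors (v₁, …, v_N) ∈ E^N, equals Σ_{σ ∈ S_N} ∏_{i=1}^N Lᵢ(v_{σ(i)}), where the sum runs over all permutations σ of {1, …, N}. -/
/-- **Harmonic projection of a product of momenta.** If `f p = ∏ i, Lᵢ p` is a product of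
`N` continuous linear functionals on a finite-dimensional real normed space, then the
`N`-th iterated Fréchet derivative of `f` at `0`, evaluated on `(v₁, …, v_N)`, equals the
symmetrized sum `∑ σ ∈ S_N, ∏ i, Lᵢ (v_{σ i})`. -/
theorem iteratedFDeriv_prod_linear_eq_sum_perm
    {E : Type*} [NormedAddCommGroup E] [NormedSpace ℝ E] [FiniteDimensional ℝ E]
    (N : ℕ) (L : Fin N → (E →L[ℝ] ℝ))
    (f : E → ℝ) (hf : ∀ p, f p = ∏ i, L i p)
    (v : Fin N → E) :
    iteratedFDeriv ℝ N f 0 v = ∑ σ : Equiv.Perm (Fin N), ∏ i, L i (v (σ i)) := by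
  classical
  set M : ContinuousMultilinearMap ℝ (fun _ : Fin N => E) ℝ :=
    (ContinuousMultilinearMap.mkPiAlgebra ℝ (Fin N) ℝ).compContinuousLinearMap L with hM
  set D : E →L[ℝ] (Fin N → E) := ContinuousLinearMap.pi (fun _ => ContinuousLinearMap.id ℝ E)
    with hD
  have hfM : f = ⇑M ∘ ⇑D := by
    funext p
    simp [hf p, hM, hD]
  rw [hfM, D.iteratedFDeriv_comp_right (M.contDiff (n := (⊤ : WithTop ℕ∞))) 0 le_top]
  have hD0 : D 0 = 0 := by simp
  rw [ContinuousMultilinearMap.compContinuousLinearMap_apply, hD0,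
    ContinuousMultilinearMap.iteratedFDeriv_eq, ContinuousMultilinearMap.iteratedFDeriv,
    ContinuousMultilinearMap.sum_apply]
  have hbij : Function.Bijective
      (fun σ : Equiv.Perm (Fin N) => σ.toEmbedding : Equiv.Perm (Fin N) → (Fin N ↪ Fin N)) := by
    constructor
    · intro σ τ h
      exact Equiv.coe_fn_injective (congrArg (fun e : Fin N ↪ Fin N => (e : Fin N → Fin N)) h)
    · intro e
      exact ⟨e.equivOfFiniteSelfEmbedding, e.toEmbedding_equivOfFiniteSelfEmbedding⟩
  rw [← (Fintype.sum_bijective _ hbij _ _ (fun σ => rfl))]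
  rw [← Equiv.sum_comp (Equiv.inv (Equiv.Perm (Fin N)))
    (fun σ : Equiv.Perm (Fin N) => ∏ i, L i (v (σ i)))]
  refine Finset.sum_congr rfl (fun σ _ => ?_)
  rw [ContinuousMultilinearMap.iteratedFDerivComponent_apply]
  have hmem : ∀ j : Fin N, j ∈ Set.range ⇑σ.toEmbedding := fun j => ⟨σ.symm j, by simp⟩
  have hsymm : ∀ (inst : DecidableEq (Fin N)) (j : Fin N)
      (h : j ∈ Set.range ⇑σ.toEmbedding),
      (@Function.Embedding.toEquivRange _ _ _ inst σ.toEmbedding).symm ⟨j, h⟩ = σ.symm j := by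
    intro inst j h
    have := @Function.Embedding.toEquivRange_symm_apply_self _ _ _ inst σ.toEmbedding (σ.symm j)
    simpa using this
  simp only [hM, hD, ContinuousMultilinearMap.compContinuousLinearMap_apply,
    ContinuousMultilinearMap.mkPiAlgebra_apply]
  refine Finset.prod_congr rfl (fun j _ => ?_)
  rw [dif_pos (hmem j)]
  have hk := hsymm (fun a b => Classical.propDecidable (a = b)) j (hmem j)
  exact congrArg
    (fun k : Fin N => (L j) ((ContinuousLinearMap.pi fun _ => ContinuousLinearMap.id ℝ E) (v k) j))
    hk
end

section
/- Let g : (−1, 1) → (−1/4, ∞) be the strictly increasing bijection g(λ) = λ/(1−λ)², and let h : (−1/4, ∞) → (−1, 1) be its inverse function. Then, as κ → 0 from the right, log(h(κ)) = log(κ) − 2κ + 3κ² − (20/3)κ³ + o(κ³); that is, (log(h(κ)) − log(κ) + 2κ − 3κ² + (20/3)κ³)/κ³ tends to 0 as κ → 0⁺. -/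
open Filter

set_option maxHeartbeats 1000000 in
private lemma auxT1_tendsto : Tendsto (fun l : ℝ =>
    2 * (Real.log (1 - l) + (l + l ^ 2 / 2 + l ^ 3 / 3)) * (1 - l) ^ 6 / l ^ 3)
    (nhdsWithin 0 (Set.Ioi (0:ℝ))) (nhds 0) := by
  refine squeeze_zero_norm' (a := fun l : ℝ => 2 * l) ?_ ?_
  · filter_upwards [Ioo_mem_nhdsGT_of_mem (Set.mem_Ico.2 ⟨le_refl (0:ℝ), one_pos⟩)]
      with l hl
    obtain ⟨hl0, hl1⟩ := hl
    have h1l : (0:ℝ) < 1 - l := by linarith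
    have habs : |l| < 1 := by rw [abs_of_pos hl0]; exact hl1
    have hbound := Real.abs_log_sub_add_sum_range_le habs 3
    have hsum : (∑ i ∈ Finset.range 3, l ^ (i + 1) / (i + 1)) = l + l ^ 2 / 2 + l ^ 3 / 3 := by
      simp [Finset.sum_range_succ]
      norm_num
    rw [hsum, abs_of_pos hl0] at hbound
    have key : |Real.log (1 - l) + (l + l ^ 2 / 2 + l ^ 3 / 3)| ≤ l ^ 4 / (1 - l) := by
      calc |Real.log (1 - l) + (l + l ^ 2 / 2 + l ^ 3 / 3)|
          = |(l + l ^ 2 / 2 + l ^ 3 / 3) + Real.log (1 - l)| := by ring_nf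
        _ ≤ l ^ (3 + 1) / (1 - l) := hbound
        _ = l ^ 4 / (1 - l) := by norm_num
    have hnorm : ‖2 * (Real.log (1 - l) + (l + l ^ 2 / 2 + l ^ 3 / 3)) * (1 - l) ^ 6 / l ^ 3‖
        = 2 * |Real.log (1 - l) + (l + l ^ 2 / 2 + l ^ 3 / 3)| * (1 - l) ^ 6 / l ^ 3 := by
      rw [Real.norm_eq_abs, abs_div, abs_mul, abs_mul]
      rw [abs_of_pos (by positivity : (0:ℝ) < (1 - l) ^ 6),
        abs_of_pos (by positivity : (0:ℝ) < l ^ 3)]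
      norm_num
    rw [hnorm]
    calc 2 * |Real.log (1 - l) + (l + l ^ 2 / 2 + l ^ 3 / 3)| * (1 - l) ^ 6 / l ^ 3
        ≤ 2 * (l ^ 4 / (1 - l)) * (1 - l) ^ 6 / l ^ 3 := by gcongr
      _ = 2 * l * (1 - l) ^ 5 := by field_simp
      _ ≤ 2 * l * 1 := by
          have h5 : (1 - l) ^ 5 ≤ 1 := pow_le_one₀ (by linarith) (by linarith)
          gcongr
      _ = 2 * l := by ring
  · have h2l : Continuous fun l : ℝ => 2 * l := by fun_prop
    have := (h2l.tendsto 0).mono_left (nhdsWithin_le_nhds (s := Set.Ioi (0:ℝ)))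
    simpa using this

set_option maxHeartbeats 1000000 in
private lemma auxF_tendsto : Tendsto (fun l : ℝ =>
    (2 * Real.log (1 - l) + 2 * (l / (1 - l) ^ 2) - 3 * (l / (1 - l) ^ 2) ^ 2
      + (20 / 3) * (l / (1 - l) ^ 2) ^ 3) * (1 - l) ^ 6 / l ^ 3)
    (nhdsWithin 0 (Set.Ioi (0:ℝ))) (nhds 0) := by
  have hT2 : Tendsto (fun l : ℝ =>
      18 * l - 18 * l ^ 2 + (31/3) * l ^ 3 - 6 * l ^ 4 + 3 * l ^ 5 - (2/3) * l ^ 6)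
      (nhdsWithin 0 (Set.Ioi (0:ℝ))) (nhds 0) := by
    have hc : Continuous (fun l : ℝ =>
        18 * l - 18 * l ^ 2 + (31/3) * l ^ 3 - 6 * l ^ 4 + 3 * l ^ 5 - (2/3) * l ^ 6) := by
      continuity
    have := hc.tendsto (0:ℝ)
    norm_num at this
    exact this.mono_left nhdsWithin_le_nhds
  have hsum := auxT1_tendsto.add hT2
  rw [add_zero] at hsum
  apply hsum.congr'
  filter_upwards [Ioo_mem_nhdsGT_of_mem (Set.mem_Ico.2 ⟨le_refl (0:ℝ), one_pos⟩)]
    with l hl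
  obtain ⟨hl0, hl1⟩ := hl
  have h1l : (1:ℝ) - l ≠ 0 := by intro hc; linarith
  have hl0' : l ≠ 0 := ne_of_gt hl0
  field_simp
  ring

set_option maxHeartbeats 1000000 in
private lemma auxF_eq (l κ : ℝ) (hl0 : 0 < l) (hl1 : l < 1) (hgl : l / (1 - l) ^ 2 = κ) :
    (Real.log l - Real.log κ + 2 * κ - 3 * κ ^ 2 + (20 / 3) * κ ^ 3) / κ ^ 3 =
    (2 * Real.log (1 - l) + 2 * (l / (1 - l) ^ 2) - 3 * (l / (1 - l) ^ 2) ^ 2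
      + (20 / 3) * (l / (1 - l) ^ 2) ^ 3) * (1 - l) ^ 6 / l ^ 3 := by
  have h1l : (0:ℝ) < 1 - l := by linarith
  have hlog : Real.log κ = Real.log l - 2 * Real.log (1 - l) := by
    rw [← hgl, Real.log_div (ne_of_gt hl0) (by positivity), Real.log_pow]
    push_cast
    ring
  rw [hlog, ← hgl]
  have hl0' : l ≠ 0 := ne_of_gt hl0
  have h1l' : (1:ℝ) - l ≠ 0 := ne_of_gt h1l
  have hpow : (l / (1 - l) ^ 2) ^ 3 = l ^ 3 / (1 - l) ^ 6 := by
    rw [div_pow, ← pow_mul]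
  rw [hpow, div_div_eq_mul_div]
  ring

/-- **Expansion of `log λ(κ)` as `κ → 0⁺`.** Let `h` be the inverse of the strictly
increasing bijection `g(λ) = λ/(1−λ)² : (−1,1) → (−1/4,∞)`. Then, as `κ → 0` from the
right, `log (h κ) = log κ − 2κ + 3κ² − (20/3)κ³ + o(κ³)`. -/
theorem log_lambda_of_kappa_expansion
    (h : ℝ → ℝ)
    (hmono : StrictMonoOn (fun l : ℝ => l / (1 - l) ^ 2) (Set.Ioo (-1 : ℝ) 1))
    (hbij : Set.BijOn (fun l : ℝ => l / (1 - l) ^ 2) (Set.Ioo (-1 : ℝ) 1)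
      (Set.Ioi (-(1 / 4) : ℝ)))
    (hmaps : Set.MapsTo h (Set.Ioi (-(1 / 4) : ℝ)) (Set.Ioo (-1 : ℝ) 1))
    (hinv : Set.InvOn h (fun l : ℝ => l / (1 - l) ^ 2) (Set.Ioo (-1 : ℝ) 1)
      (Set.Ioi (-(1 / 4) : ℝ))) :
    Tendsto
      (fun κ : ℝ =>
        (Real.log (h κ) - Real.log κ + 2 * κ - 3 * κ ^ 2 + (20 / 3) * κ ^ 3) / κ ^ 3)
      (nhdsWithin 0 (Set.Ioi (0 : ℝ))) (nhds 0) := by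
  -- Basic facts about `h κ` for `κ > 0`.
  have hk : ∀ κ : ℝ, 0 < κ → (h κ ∈ Set.Ioo (0:ℝ) 1 ∧ h κ / (1 - h κ) ^ 2 = κ) := by
    intro κ hκ
    have hκ' : κ ∈ Set.Ioi (-(1 / 4) : ℝ) := by
      simp only [Set.mem_Ioi]; linarith
    have hmem := hmaps hκ'
    have hginv : h κ / (1 - h κ) ^ 2 = κ := hinv.2 hκ'
    obtain ⟨hm1, hm2⟩ := hmem
    have hpos : 0 < h κ := by
      by_contra hle
      push_neg at hle
      have h1 : (0:ℝ) < 1 - h κ := by linarith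
      have : h κ / (1 - h κ) ^ 2 ≤ 0 :=
        div_nonpos_iff.2 (Or.inr ⟨hle, by positivity⟩)
      rw [hginv] at this; linarith
    exact ⟨⟨hpos, hm2⟩, hginv⟩
  -- `h` tends to `0` within `Ioi 0`.
  have htend : Tendsto h (nhdsWithin 0 (Set.Ioi (0:ℝ))) (nhdsWithin 0 (Set.Ioi (0:ℝ))) := by
    rw [tendsto_nhdsWithin_iff]
    constructor
    · rw [tendsto_order]
      constructor
      · intro a ha
        filter_upwards [self_mem_nhdsWithin] with κ hκ
        have := (hk κ hκ).1.1
        linarith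
      · intro a ha
        set ε : ℝ := min a (1/2) with hε
        have hε0 : 0 < ε := lt_min ha (by norm_num)
        have hε1 : ε < 1 := lt_of_le_of_lt (min_le_right _ _) (by norm_num)
        have hεa : ε ≤ a := min_le_left _ _
        have hgε : 0 < ε / (1 - ε) ^ 2 := by
          have : (0:ℝ) < 1 - ε := by linarith
          positivity
        filter_upwards [Ioo_mem_nhdsGT_of_mem (Set.mem_Ico.2 ⟨le_refl (0:ℝ), hgε⟩)]
          with κ hκ
        obtain ⟨hκ0, hκε⟩ := hκ
        obtain ⟨⟨hl0, hl1⟩, hgl⟩ := hk κ hκ0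
        have hmemh : h κ ∈ Set.Ioo (-1:ℝ) 1 := ⟨by linarith, hl1⟩
        have hmemε : ε ∈ Set.Ioo (-1:ℝ) 1 := ⟨by linarith, hε1⟩
        have : h κ < ε := by
          rw [← hmono.lt_iff_lt hmemh hmemε]
          simpa [hgl] using hκε
        linarith
    · filter_upwards [self_mem_nhdsWithin] with κ hκ
      exact (hk κ hκ).1.1
  have hcomp := auxF_tendsto.comp htend
  apply hcomp.congr'
  filter_upwards [self_mem_nhdsWithin] with κ hκ
  obtain ⟨⟨hl0, hl1⟩, hgl⟩ := hk κ hκ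
  exact (auxF_eq (h κ) κ hl0 hl1 hgl).symm
end
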